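/- arXiv:2506.16290 — 4 statements merged into one kernel-verified Lean document; each statement's English description precedes it below -/
import Mathlib

section
/- Bernstein relation for elliptic Demazure–Lusztig operators: for every simple root α and every a ∈ Q, one has T_α^λ · a = ^{s_α}(^{s_α^dyn} a) · T_α^λ + [θ(ℏ)θ(z_α−λ_{α∨})/(θ(z_α)θ(ℏ−λ_{α∨}))] · ^{s_α^dyn}(a − ^{s_α}a) · δ_α^dyn in Q_{W^dyn×W}. -/
/-! The Bernstein relation is pure bookkeeping in the twisted group algebra: each of the two
terms of `T_α^λ` is a coefficient times an element that moves scalars past itself by a field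
automorphism (`δ_α δ_α^dyn` by `s_α ∘ s_α^dyn`, `δ_α^dyn` by `s_α^dyn`). Moving `a` to the
left therefore twists it by `s_α s_α^dyn` in the first term and only by `s_α^dyn` in the
second, and the discrepancy in the second term is the correction `^{s_α^dyn}(a − ^{s_α}a)`. -/

open scoped BigOperators
open scoped Classical

/-- The product of a word in the simple reflections. -/
def wordProd {n : ℕ} {W : Type*} [Group W] (s : Fin n → W) (l : List (Fin n)) : W :=
  (l.map s).prod

/-- `l` is a reduced word for `w` (a product expression of minimal length). -/
def IsReducedWordFor {n : ℕ} {W : Type*} [Group W] (s : Fin n → W) (w : W)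
    (l : List (Fin n)) : Prop :=
  wordProd s l = w ∧ ∀ l' : List (Fin n), wordProd s l' = w → l.length ≤ l'.length

/-- The Bruhat order on the Weyl group, defined via the subword property. -/
def BruhatLE {n : ℕ} {W : Type*} [Group W] (s : Fin n → W) (v w : W) : Prop :=
  ∃ lw : List (Fin n), IsReducedWordFor s w lw ∧
    ∃ lv : List (Fin n), lv.Sublist lw ∧ wordProd s lv = v

section TwistedCommutation

variable {Q R : Type*} [Ring R]

def TwistsScalars [Semiring Q] (φ : Q →+* R) (f : Q → Q) (x : R) : Prop :=
  ∀ a, x * φ a = φ (f a) * x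

theorem TwistsScalars.mul [Semiring Q] {φ : Q →+* R} {f g : Q → Q} {x y : R}
    (hx : TwistsScalars φ f x) (hy : TwistsScalars φ g y) :
    TwistsScalars φ (f ∘ g) (x * y) := fun a => by
  rw [mul_assoc, hy, ← mul_assoc, hx, mul_assoc, Function.comp_apply]

theorem TwistsScalars.scalar_mul_add_scalar_mul_mul [CommRing Q] {φ : Q →+* R} {f g : Q → Q}
    {x y : R} (hx : TwistsScalars φ f x) (hy : TwistsScalars φ g y) (b₁ b₂ a : Q) :
    (φ b₁ * x + φ b₂ * y) * φ a =
      φ (f a) * (φ b₁ * x + φ b₂ * y) + φ (b₂ * (g a - f a)) * y := by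
  have hb₁ : φ b₁ * x * φ a = φ (f a) * (φ b₁ * x) := by
    rw [mul_assoc, hx, ← mul_assoc, ← mul_assoc, ← map_mul, ← map_mul, mul_comm]
  have hb₂ : φ b₂ * y * φ a = φ (f a) * (φ b₂ * y) + φ (b₂ * (g a - f a)) * y := by
    rw [mul_assoc, hy, ← mul_assoc, ← mul_assoc, ← map_mul, ← map_mul, mul_sub, map_sub,
      sub_mul, mul_comm (f a), add_sub_cancel]
  rw [add_mul, hb₁, hb₂, mul_add, add_assoc]

end TwistedCommutation

theorem bernstein_relation_general
    -- the Weyl group `W`, generated by the simple reflections `s i`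
    {n : ℕ} {W : Type*} [Group W]
    (s : Fin n → W)
    -- the root lattice `L = ℤΦ` and coroot lattice `Lc = ℤΦ∨` with their `W`-actions,
    -- the roots `Φ`, positive roots `Φpos`, simple roots `αr i`, and the coroot map `cor`
    {L Lc : Type*} [AddCommGroup Lc]
    (αr : Fin n → L)
    (cor : L → Lc)
    -- the field `Q` with two commuting `W`-actions: the ordinary action `σ`
    -- and the dynamical action `σd`
    {Q : Type*} [Field Q]
    (σ σd : W →* (Q ≃+* Q))
    (hσcomm : ∀ (w v : W) (a : Q), σ w (σd v a) = σd v (σ w a))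
    -- the theta data: `A μ = θ(z_μ)`, `Ah μ = θ(ℏ-z_μ)`, `B ν = θ(λ_ν)`, `Bh ν = θ(ℏ-λ_ν)`,
    -- `C μ ν = θ(z_μ+λ_ν)`, `c = θ(ℏ)`
    (A Ah : L → Q) (B Bh : Lc → Q) (C : L → Lc → Q) (c : Q)
    -- the twisted group algebra `R = Q_{W^dyn×W}`, free left `Q`-module with basis
    -- `{δd w * δ v}` and twisted product; `φ : Q → R` is the inclusion
    {R : Type*} [Ring R]
    (φ : Q →+* R) (δd δ : W →* R)
    (hδφ : ∀ (v : W) (a : Q), δ v * φ a = φ (σ v a) * δ v)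
    (hδdφ : ∀ (w : W) (a : Q), δd w * φ a = φ (σd w a) * δd w)
    (i : Fin n) (a : Q) (Ti : R)
    (hTi : Ti =
      φ (Ah (αr i) * B (cor (αr i)) / (A (αr i) * Bh (cor (αr i)))) * (δ (s i) * δd (s i)) +
        φ (c * C (αr i) (-(cor (αr i))) / (A (αr i) * Bh (cor (αr i)))) * δd (s i)) :
    Ti * φ a =
      φ (σ (s i) (σd (s i) a)) * Ti +
        φ (c * C (αr i) (-(cor (αr i))) / (A (αr i) * Bh (cor (αr i))) *
            σd (s i) (a - σ (s i) a)) * δd (s i) := by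
  have hδd : TwistsScalars φ (σd (s i)) (δd (s i)) := hδdφ (s i)
  have hδδd : TwistsScalars φ (σ (s i) ∘ σd (s i)) (δ (s i) * δd (s i)) :=
    TwistsScalars.mul (hδφ (s i)) hδd
  have hcorrection : σd (s i) (a - σ (s i) a) = σd (s i) a - σ (s i) (σd (s i) a) := by
    rw [map_sub, hσcomm]
  rw [hcorrection, hTi]
  exact hδδd.scalar_mul_add_scalar_mul_mul hδd _ _ a

/-- Bernstein relation for the elliptic Demazure–Lusztig operators:
for every simple root `α = αr i` and every `a ∈ Q`,
`T_α^λ · a = ^{s_α}(^{s_α^dyn} a) · T_α^λ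
  + [θ(ℏ)θ(z_α−λ_{α∨})/(θ(z_α)θ(ℏ−λ_{α∨}))] · ^{s_α^dyn}(a − ^{s_α}a) · δ_α^dyn`. -/
theorem bernstein_relation
    -- the Weyl group `W`, generated by the simple reflections `s i`
    {n : ℕ} {W : Type*} [Group W] [Fintype W] [DecidableEq W]
    (s : Fin n → W) (hgen : Subgroup.closure (Set.range s) = ⊤)
    (hs2 : ∀ i : Fin n, s i * s i = 1)
    -- the root lattice `L = ℤΦ` and coroot lattice `Lc = ℤΦ∨` with their `W`-actions,
    -- the roots `Φ`, positive roots `Φpos`, simple roots `αr i`, and the coroot map `cor`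
    {L Lc : Type*} [AddCommGroup L] [AddCommGroup Lc] [DecidableEq L]
    (ρ : W →* Multiplicative (AddAut L)) (ρc : W →* Multiplicative (AddAut Lc))
    (Φ Φpos : Finset L)
    (hΦ : (Φ : Set L) = (Φpos : Set L) ∪ (-(Φpos : Set L)))
    (αr : Fin n → L) (hαr : ∀ i, αr i ∈ Φpos)
    (cor : L → Lc)
    (hραr : ∀ i, ρ (s i) (αr i) = -(αr i))
    (hperm : ∀ i : Fin n, ∀ β ∈ Φpos, β ≠ αr i → ρ (s i) β ∈ Φpos)
    (hΦinv : ∀ w : W, ∀ β ∈ Φ, ρ w β ∈ Φ)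
    (hcorW : ∀ w : W, ∀ β ∈ Φ, cor (ρ w β) = ρc w (cor β))
    (hcorneg : ∀ β ∈ Φ, cor (-β) = -(cor β))
    -- the field `Q` with two commuting `W`-actions: the ordinary action `σ`
    -- and the dynamical action `σd`
    {Q : Type*} [Field Q]
    (σ σd : W →* (Q ≃+* Q))
    (hσcomm : ∀ (w v : W) (a : Q), σ w (σd v a) = σd v (σ w a))
    -- the theta data: `A μ = θ(z_μ)`, `Ah μ = θ(ℏ-z_μ)`, `B ν = θ(λ_ν)`, `Bh ν = θ(ℏ-λ_ν)`,
    -- `C μ ν = θ(z_μ+λ_ν)`, `c = θ(ℏ)`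
    (A Ah : L → Q) (B Bh : Lc → Q) (C : L → Lc → Q) (c : Q)
    (hA : ∀ (w : W) (μ : L), σ w (A μ) = A (ρ w μ))
    (hAh : ∀ (w : W) (μ : L), σ w (Ah μ) = Ah (ρ w μ))
    (hB : ∀ (w : W) (ν : Lc), σ w (B ν) = B ν)
    (hBh : ∀ (w : W) (ν : Lc), σ w (Bh ν) = Bh ν)
    (hC : ∀ (w : W) (μ : L) (ν : Lc), σ w (C μ ν) = C (ρ w μ) ν)
    (hdA : ∀ (w : W) (μ : L), σd w (A μ) = A μ)
    (hdAh : ∀ (w : W) (μ : L), σd w (Ah μ) = Ah μ)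
    (hdB : ∀ (w : W) (ν : Lc), σd w (B ν) = B (ρc w ν))
    (hdBh : ∀ (w : W) (ν : Lc), σd w (Bh ν) = Bh (ρc w ν))
    (hdC : ∀ (w : W) (μ : L) (ν : Lc), σd w (C μ ν) = C μ (ρc w ν))
    (hcσ : ∀ w : W, σ w c = c) (hcσd : ∀ w : W, σd w c = c)
    (hAneg : ∀ μ : L, A (-μ) = -(A μ)) (hBneg : ∀ ν : Lc, B (-ν) = -(B ν))
    (hA0 : ∀ β ∈ Φ, A β ≠ 0) (hAh0 : ∀ β ∈ Φ, Ah β ≠ 0) (hAh0n : ∀ β ∈ Φ, Ah (-β) ≠ 0)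
    (hB0 : ∀ β ∈ Φ, B (cor β) ≠ 0) (hBh0 : ∀ β ∈ Φ, Bh (cor β) ≠ 0)
    (hBh0n : ∀ β ∈ Φ, Bh (-(cor β)) ≠ 0)
    -- the twisted group algebra `R = Q_{W^dyn×W}`, free left `Q`-module with basis
    -- `{δd w * δ v}` and twisted product; `φ : Q → R` is the inclusion
    {R : Type*} [Ring R]
    (φ : Q →+* R) (δd δ : W →* R)
    (hδcomm : ∀ w v : W, δ v * δd w = δd w * δ v)
    (hδφ : ∀ (v : W) (a : Q), δ v * φ a = φ (σ v a) * δ v)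
    (hδdφ : ∀ (w : W) (a : Q), δd w * φ a = φ (σd w a) * δd w)
    (hspan : ∀ x : R, ∃ cf : W × W → Q, x = ∑ p : W × W, φ (cf p) * δd p.1 * δ p.2)
    (hfree : ∀ cf : W × W → Q,
      (∑ p : W × W, φ (cf p) * δd p.1 * δ p.2) = 0 → ∀ p : W × W, cf p = 0)
    (i : Fin n) (a : Q) (Ti : R)
    (hTi : Ti =
      φ (Ah (αr i) * B (cor (αr i)) / (A (αr i) * Bh (cor (αr i)))) * (δ (s i) * δd (s i)) +
        φ (c * C (αr i) (-(cor (αr i))) / (A (αr i) * Bh (cor (αr i)))) * δd (s i)) :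
    Ti * φ a =
      φ (σ (s i) (σd (s i) a)) * Ti +
        φ (c * C (αr i) (-(cor (αr i))) / (A (αr i) * Bh (cor (αr i))) *
            σd (s i) (a - σ (s i) a)) * δd (s i) :=
  bernstein_relation_general s αr cor σ σd hσcomm A Ah B Bh C c φ δd δ hδφ hδdφ i a Ti hTi
end

section
/- The transition matrices are inverse to each other in the following twisted sense: for all w, u ∈ W, Σ_{v∈W} a^λ_{w,v} · ^{w^dyn}(b^λ_{v,u}) = δ^{Kr}_{w,u} and Σ_{v∈W} b^λ_{w,v} · ^{(v⁻¹)^dyn}(a^λ_{v,u}) = δ^{Kr}_{w,u}, where δ^{Kr} is the Kronecker delta. -/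
/-! Expanding `δ_w = Σ_v b_{w,v} δ^dyn_{v⁻¹} T_v` and substituting
`T_v = Σ_x a_{v,x} δ^dyn_v δ_x`, the factor `δ^dyn_{v⁻¹}` moves past the coefficients
`a_{v,x}`, twisting them by `(v⁻¹)^dyn`, and then cancels `δ^dyn_v`. Comparing coefficients
of `δ_x` (the `δ^dyn_w δ_v` are a basis) gives the second identity: `b` times the twisted
matrix `a'_{v,u} = ^{(v⁻¹)^dyn} a_{v,u}` is the identity matrix. Over a commutative ring a
one-sided inverse of a square matrix is two-sided, so also `a' b = 1`, and applying `w^dyn`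
to row `w` of that identity gives the first one. -/

open scoped BigOperators
open scoped Classical

section TwistedGroupAlgebra

variable {W Q R : Type*} [Group W] [Ring Q] [Ring R]
  {σd : W →* (Q ≃+* Q)} {φ : Q →+* R} {δd δ : W →* R}

theorem mul_deltaDyn_inv_mul_deltaDyn_cancel
    (hδdφ : ∀ (w : W) (a : Q), δd w * φ a = φ (σd w a) * δd w)
    (b a : Q) (v : W) (y : R) :
    φ b * δd v⁻¹ * (φ a * δd v * y) = φ (b * σd v⁻¹ a) * y := by
  calc φ b * δd v⁻¹ * (φ a * δd v * y)
      = φ b * (δd v⁻¹ * φ a) * δd v * y := by simp only [mul_assoc]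
    _ = φ b * φ (σd v⁻¹ a) * (δd v⁻¹ * δd v) * y := by rw [hδdφ]; simp only [mul_assoc]
    _ = φ (b * σd v⁻¹ a) * y := by
      rw [← map_mul δd, inv_mul_cancel, map_one, mul_one, map_mul]

theorem eq_zero_of_sum_map_mul_eq_zero [Fintype W]
    (hfree : ∀ cf : W × W → Q,
      (∑ p : W × W, φ (cf p) * δd p.1 * δ p.2) = 0 → ∀ p : W × W, cf p = 0)
    {f : W → Q} (hf : ∑ x, φ (f x) * δ x = 0) (x : W) : f x = 0 := by
  classical
  simpa using hfree (fun p => if p.1 = 1 then f p.2 else 0)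
    (by simpa [Fintype.sum_prod_type, apply_ite φ, ite_mul] using hf) (1, x)

theorem coeff_eq_ite_of_eq_sum [Fintype W] [DecidableEq W]
    (hfree : ∀ cf : W × W → Q,
      (∑ p : W × W, φ (cf p) * δd p.1 * δ p.2) = 0 → ∀ p : W × W, cf p = 0)
    {w : W} {g : W → Q} (hg : δ w = ∑ x, φ (g x) * δ x) (x : W) :
    g x = if w = x then 1 else 0 := by
  refine sub_eq_zero.mp
    (eq_zero_of_sum_map_mul_eq_zero hfree (f := fun y => g y - if w = y then 1 else 0) ?_ x)
  simp [sub_mul, Finset.sum_sub_distrib, ← hg, apply_ite φ, ite_mul]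

theorem sum_coeff_mul_twist_eq_ite [Fintype W] [DecidableEq W]
    (hδdφ : ∀ (w : W) (a : Q), δd w * φ a = φ (σd w a) * δd w)
    (hfree : ∀ cf : W × W → Q,
      (∑ p : W × W, φ (cf p) * δd p.1 * δ p.2) = 0 → ∀ p : W × W, cf p = 0)
    {T : W → R} {a b : W → W → Q}
    (ha : ∀ w : W, T w = ∑ v : W, φ (a w v) * δd w * δ v)
    (hb : ∀ w : W, δ w = ∑ v : W, φ (b w v) * δd v⁻¹ * T v) (w u : W) :
    ∑ v, b w v * σd v⁻¹ (a v u) = if w = u then 1 else 0 := by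
  refine coeff_eq_ite_of_eq_sum hfree (g := fun x => ∑ v, b w v * σd v⁻¹ (a v x)) ?_ u
  simp only [map_sum, Finset.sum_mul]
  rw [hb, Finset.sum_comm]
  refine Finset.sum_congr rfl fun v _ => ?_
  simp only [ha, Finset.mul_sum, mul_deltaDyn_inv_mul_deltaDyn_cancel hδdφ]

end TwistedGroupAlgebra

theorem sum_mul_twist_eq_ite_of_sum_mul_twist_eq_ite {W Q : Type*} [Group W] [Fintype W]
    [DecidableEq W] [CommRing Q] (σd : W →* (Q ≃+* Q)) {a b : W → W → Q}
    (h : ∀ w u, ∑ v, b w v * σd v⁻¹ (a v u) = if w = u then 1 else 0) (w u : W) :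
    ∑ v, a w v * σd w (b v u) = if w = u then 1 else 0 := by
  have hBA : Matrix.of b * Matrix.of (fun v u => σd v⁻¹ (a v u)) = (1 : Matrix W W Q) := by
    ext w u
    simp only [Matrix.mul_apply, Matrix.of_apply, Matrix.one_apply, h]
  have hAB : Matrix.of (fun v u => σd v⁻¹ (a v u)) * Matrix.of b = (1 : Matrix W W Q) :=
    mul_eq_one_comm.mp hBA
  replace hAB := congrFun (congrFun hAB w) u
  simp only [Matrix.mul_apply, Matrix.of_apply, Matrix.one_apply] at hAB
  have hσd : ∀ x, σd w (σd w⁻¹ x) = x := fun x => by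
    rw [map_inv]; exact RingEquiv.apply_symm_apply _ x
  calc ∑ v, a w v * σd w (b v u)
      = σd w (∑ v, σd w⁻¹ (a w v) * b v u) := by simp only [map_sum, map_mul, hσd]
    _ = if w = u then 1 else 0 := by rw [hAB]; split_ifs <;> simp

theorem transition_matrices_inverse_general
    -- the Weyl group `W`, generated by the simple reflections `s i`
    {W : Type*} [Group W] [Fintype W] [DecidableEq W]
    -- the field `Q` with two commuting `W`-actions: the ordinary action `σ`
    -- and the dynamical action `σd`
    {Q : Type*} [Field Q]
    (σd : W →* (Q ≃+* Q))
    -- the twisted group algebra `R = Q_{W^dyn×W}`, free left `Q`-module with basis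
    -- `{δd w * δ v}` and twisted product; `φ : Q → R` is the inclusion
    {R : Type*} [Ring R]
    (φ : Q →+* R) (δd δ : W →* R)
    (hδdφ : ∀ (w : W) (a : Q), δd w * φ a = φ (σd w a) * δd w)
    (hfree : ∀ cf : W × W → Q,
      (∑ p : W × W, φ (cf p) * δd p.1 * δ p.2) = 0 → ∀ p : W × W, cf p = 0)
    -- the elliptic Demazure–Lusztig operators `Tl w = T_w^λ`, `Tml w = T_w^{-λ}`
    (Tl : W → R)
    -- the coefficients `a^λ_{w,v}` of `T_w^λ` in the basis `{δd w * δ v}`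
    (aL : W → W → Q)
    (haL : ∀ w : W, Tl w = ∑ v : W, φ (aL w v) * δd w * δ v)
    -- the coefficients `b^λ_{w,v}` of `δ_w` in the basis `{δd v⁻¹ * T_v^λ}`
    (bL : W → W → Q)
    (hbL : ∀ w : W, δ w = ∑ v : W, φ (bL w v) * δd v⁻¹ * Tl v)
    (w u : W) :
    (∑ v : W, aL w v * σd w (bL v u)) = (if w = u then 1 else 0) ∧
    (∑ v : W, bL w v * σd v⁻¹ (aL v u)) = (if w = u then 1 else 0) := by
  have hba := sum_coeff_mul_twist_eq_ite hδdφ hfree haL hbL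
  exact ⟨sum_mul_twist_eq_ite_of_sum_mul_twist_eq_ite σd hba w u, hba w u⟩

/-- the transition matrices `a^λ` and `b^λ` are inverse in the twisted sense:
`Σ_v a^λ_{w,v} · ^{w^dyn}(b^λ_{v,u}) = δ^{Kr}_{w,u}` and
`Σ_v b^λ_{w,v} · ^{(v⁻¹)^dyn}(a^λ_{v,u}) = δ^{Kr}_{w,u}`. -/
theorem transition_matrices_inverse
    -- the Weyl group `W`, generated by the simple reflections `s i`
    {n : ℕ} {W : Type*} [Group W] [Fintype W] [DecidableEq W]
    (s : Fin n → W) (hgen : Subgroup.closure (Set.range s) = ⊤)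
    (hs2 : ∀ i : Fin n, s i * s i = 1)
    -- the root lattice `L = ℤΦ` and coroot lattice `Lc = ℤΦ∨` with their `W`-actions,
    -- the roots `Φ`, positive roots `Φpos`, simple roots `αr i`, and the coroot map `cor`
    {L Lc : Type*} [AddCommGroup L] [AddCommGroup Lc] [DecidableEq L]
    (ρ : W →* Multiplicative (AddAut L)) (ρc : W →* Multiplicative (AddAut Lc))
    (Φ Φpos : Finset L)
    (hΦ : (Φ : Set L) = (Φpos : Set L) ∪ (-(Φpos : Set L)))
    (αr : Fin n → L) (hαr : ∀ i, αr i ∈ Φpos)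
    (cor : L → Lc)
    (hραr : ∀ i, ρ (s i) (αr i) = -(αr i))
    (hperm : ∀ i : Fin n, ∀ β ∈ Φpos, β ≠ αr i → ρ (s i) β ∈ Φpos)
    (hΦinv : ∀ w : W, ∀ β ∈ Φ, ρ w β ∈ Φ)
    (hcorW : ∀ w : W, ∀ β ∈ Φ, cor (ρ w β) = ρc w (cor β))
    (hcorneg : ∀ β ∈ Φ, cor (-β) = -(cor β))
    -- the field `Q` with two commuting `W`-actions: the ordinary action `σ`
    -- and the dynamical action `σd`
    {Q : Type*} [Field Q]
    (σ σd : W →* (Q ≃+* Q))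
    (hσcomm : ∀ (w v : W) (a : Q), σ w (σd v a) = σd v (σ w a))
    -- the theta data: `A μ = θ(z_μ)`, `Ah μ = θ(ℏ-z_μ)`, `B ν = θ(λ_ν)`, `Bh ν = θ(ℏ-λ_ν)`,
    -- `C μ ν = θ(z_μ+λ_ν)`, `c = θ(ℏ)`
    (A Ah : L → Q) (B Bh : Lc → Q) (C : L → Lc → Q) (c : Q)
    (hA : ∀ (w : W) (μ : L), σ w (A μ) = A (ρ w μ))
    (hAh : ∀ (w : W) (μ : L), σ w (Ah μ) = Ah (ρ w μ))
    (hB : ∀ (w : W) (ν : Lc), σ w (B ν) = B ν)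
    (hBh : ∀ (w : W) (ν : Lc), σ w (Bh ν) = Bh ν)
    (hC : ∀ (w : W) (μ : L) (ν : Lc), σ w (C μ ν) = C (ρ w μ) ν)
    (hdA : ∀ (w : W) (μ : L), σd w (A μ) = A μ)
    (hdAh : ∀ (w : W) (μ : L), σd w (Ah μ) = Ah μ)
    (hdB : ∀ (w : W) (ν : Lc), σd w (B ν) = B (ρc w ν))
    (hdBh : ∀ (w : W) (ν : Lc), σd w (Bh ν) = Bh (ρc w ν))
    (hdC : ∀ (w : W) (μ : L) (ν : Lc), σd w (C μ ν) = C μ (ρc w ν))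
    (hcσ : ∀ w : W, σ w c = c) (hcσd : ∀ w : W, σd w c = c)
    (hAneg : ∀ μ : L, A (-μ) = -(A μ)) (hBneg : ∀ ν : Lc, B (-ν) = -(B ν))
    (hA0 : ∀ β ∈ Φ, A β ≠ 0) (hAh0 : ∀ β ∈ Φ, Ah β ≠ 0) (hAh0n : ∀ β ∈ Φ, Ah (-β) ≠ 0)
    (hB0 : ∀ β ∈ Φ, B (cor β) ≠ 0) (hBh0 : ∀ β ∈ Φ, Bh (cor β) ≠ 0)
    (hBh0n : ∀ β ∈ Φ, Bh (-(cor β)) ≠ 0)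
    -- the twisted group algebra `R = Q_{W^dyn×W}`, free left `Q`-module with basis
    -- `{δd w * δ v}` and twisted product; `φ : Q → R` is the inclusion
    {R : Type*} [Ring R]
    (φ : Q →+* R) (δd δ : W →* R)
    (hδcomm : ∀ w v : W, δ v * δd w = δd w * δ v)
    (hδφ : ∀ (v : W) (a : Q), δ v * φ a = φ (σ v a) * δ v)
    (hδdφ : ∀ (w : W) (a : Q), δd w * φ a = φ (σd w a) * δd w)
    (hspan : ∀ x : R, ∃ cf : W × W → Q, x = ∑ p : W × W, φ (cf p) * δd p.1 * δ p.2)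
    (hfree : ∀ cf : W × W → Q,
      (∑ p : W × W, φ (cf p) * δd p.1 * δ p.2) = 0 → ∀ p : W × W, cf p = 0)
    -- the elliptic Demazure–Lusztig operators `Tl w = T_w^λ`, `Tml w = T_w^{-λ}`
    -- (the braid relations and `(T_i)² = 1` amount to `T_u T_v = T_(uv)` for all `u,v`)
    (Tl Tml : W → R)
    (hTl1 : Tl 1 = 1) (hTml1 : Tml 1 = 1)
    (hTlmul : ∀ u v : W, Tl u * Tl v = Tl (u * v))
    (hTmlmul : ∀ u v : W, Tml u * Tml v = Tml (u * v))
    (hTls : ∀ i : Fin n, Tl (s i) =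
      φ (Ah (αr i) * B (cor (αr i)) / (A (αr i) * Bh (cor (αr i)))) * (δ (s i) * δd (s i)) +
        φ (c * C (αr i) (-(cor (αr i))) / (A (αr i) * Bh (cor (αr i)))) * δd (s i))
    (hTmls : ∀ i : Fin n, Tml (s i) =
      -(φ (Ah (αr i) * B (cor (αr i)) / (A (αr i) * Bh (-(cor (αr i))))) * (δ (s i) * δd (s i))) +
        φ (c * C (αr i) (cor (αr i)) / (A (αr i) * Bh (-(cor (αr i))))) * δd (s i))
    -- the coefficients `a^λ_{w,v}` of `T_w^λ` in the basis `{δd w * δ v}`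
    (aL : W → W → Q)
    (haL : ∀ w : W, Tl w = ∑ v : W, φ (aL w v) * δd w * δ v)
    (haL0 : ∀ w v : W, ¬ BruhatLE s v w → aL w v = 0)
    -- the coefficients `b^λ_{w,v}` of `δ_w` in the basis `{δd v⁻¹ * T_v^λ}`
    (bL : W → W → Q)
    (hbL : ∀ w : W, δ w = ∑ v : W, φ (bL w v) * δd v⁻¹ * Tl v)
    (hbL0 : ∀ w v : W, ¬ BruhatLE s v w → bL w v = 0)
    (w u : W) :
    (∑ v : W, aL w v * σd w (bL v u)) = (if w = u then 1 else 0) ∧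
    (∑ v : W, bL w v * σd v⁻¹ (aL v u)) = (if w = u then 1 else 0) :=
  transition_matrices_inverse_general σd φ δd δ hδdφ hfree Tl aL haL bL hbL w u
end

section
/- The set {T_w^λ : w ∈ W} is a basis of Q_{W^dyn×W} as a free left Q_{W^dyn}-module (where Q_{W^dyn×W} is viewed as a left Q_{W^dyn}-module via left multiplication). -/
/-!
Over `Q_{W^dyn}` the elements `δ_v` form a basis of `Q_{W^dyn×W}`, and conjugation by `δ_v`
preserves `Q_{W^dyn}`. Each `T_i^λ` has the form `a δ_{s_i} + b` with `a` a unit of `Q_{W^dyn}`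
(its coefficient `θ(ℏ-z_α)θ(λ_{α∨})/(θ(z_α)θ(ℏ-λ_{α∨}))` does not vanish), so multiplying out
`T_w^λ` along a reduced word of `w` gives a unit times `δ_w` plus a combination of the `δ_v`
with `v` the product of a proper subword, hence of smaller length. With respect to length, the
transition from `(δ_v)` to `(T_w^λ)` is thus triangular with unit diagonal.
-/

open scoped BigOperators
open scoped Classical

/-- The multiplicative group structure on `AddAut A` (composition), as in the older Mathlib,
which has since made `AddAut A` an additive group. -/
instance AddAut.groupOfComp {A : Type*} [Add A] : Group (AddAut A) where
  mul g h := AddEquiv.trans h g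
  one := AddEquiv.refl _
  inv := AddEquiv.symm
  mul_assoc _ _ _ := rfl
  one_mul _ := rfl
  mul_one _ := rfl
  inv_mul_cancel := AddEquiv.self_trans_symm

open Submodule Set

namespace Module.Basis

variable {ι S M : Type*} [Ring S] [AddCommGroup M] [Module S M] (b : Basis ι S M)

theorem repr_apply_of_sub_smul_mem_span {x : M} {u : S} {i j : ι} {P : Set ι}
    (hx : x - u • b i ∈ span S (b '' P)) (hj : j ∉ P) :
    b.repr x j = Finsupp.single i u j := by
  have hzero : b.repr (x - u • b i) j = 0 :=
    Finsupp.notMem_support_iff.1 fun hmem => hj (b.mem_span_image.1 hx hmem)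
  simpa [sub_eq_zero, Finsupp.smul_single_one] using hzero

variable {T : ι → M} {ℓ : ι → ℕ}

theorem top_le_span_of_triangular
    (hT : ∀ i, ∃ u : S, IsUnit u ∧ T i - u • b i ∈ span S (b '' {j | ℓ j < ℓ i})) :
    ⊤ ≤ span S (range T) := by
  have hb : ∀ i, b i ∈ span S (range T) := by
    intro i
    induction hi : ℓ i using Nat.strong_induction_on generalizing i with
    | _ k ih =>
      obtain ⟨u, ⟨u, rfl⟩, hlower⟩ := hT i
      have hlower' : T i - (u : S) • b i ∈ span S (range T) := by
        refine span_le.2 ?_ hlower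
        rintro _ ⟨j, hj, rfl⟩
        exact ih _ (hi ▸ hj) j rfl
      have hTi : T i ∈ span S (range T) := subset_span ⟨i, rfl⟩
      rw [← inv_smul_smul u (b i), Units.smul_def u, ← sub_sub_cancel (T i) ((u : S) • b i)]
      exact smul_mem _ _ (sub_mem hTi hlower')
  rw [← b.span_eq]
  exact span_le.2 (range_subset_iff.2 hb)

theorem linearIndependent_of_triangular
    (hT : ∀ i, ∃ u : S, IsUnit u ∧ T i - u • b i ∈ span S (b '' {j | ℓ j < ℓ i})) :
    LinearIndependent S T := by
  rw [linearIndependent_iff']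
  intro s g hsum i hi
  by_contra hgi
  obtain ⟨i₀, hi₀, hmax⟩ := (s.filter (g · ≠ 0)).exists_max_image ℓ ⟨i, by simp [hi, hgi]⟩
  rw [Finset.mem_filter] at hi₀
  obtain ⟨u₀, hu₀, hlower₀⟩ := hT i₀
  -- the coefficient of `b i₀` in `∑ g j • T j` only sees the term `j = i₀`, by maximality of `ℓ i₀`
  have hcoeff : g i₀ * u₀ = 0 := by
    have h := congrArg (fun x => b.repr x i₀) hsum
    simp only [map_sum, map_smul, Finsupp.coe_finsetSum, Finset.sum_apply, Finsupp.smul_apply,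
      smul_eq_mul, map_zero, Finsupp.zero_apply] at h
    rwa [Finset.sum_eq_single_of_mem i₀ hi₀.1, b.repr_apply_of_sub_smul_mem_span hlower₀
      (lt_irrefl (ℓ i₀)), Finsupp.single_eq_same] at h
    intro j hj hji₀
    by_cases hgj : g j = 0
    · rw [hgj, zero_mul]
    obtain ⟨u, -, hlower⟩ := hT j
    rw [b.repr_apply_of_sub_smul_mem_span hlower (hmax j (by simp [hj, hgj])).not_gt,
      Finsupp.single_eq_of_ne hji₀.symm, mul_zero]
  exact hi₀.2 ((hu₀.mul_left_eq_zero).1 hcoeff)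

end Module.Basis

theorem map_inv_mul_map_self {G M : Type*} [Group G] [Monoid M] (f : G →* M) (g : G) :
    f g⁻¹ * f g = 1 := by
  rw [← map_mul, inv_mul_cancel, map_one]

section Words

variable {n : ℕ} {W : Type*} [Group W]

theorem wordProd_nil (s : Fin n → W) : wordProd s [] = 1 := rfl

theorem wordProd_cons (s : Fin n → W) (i : Fin n) (l : List (Fin n)) :
    wordProd s (i :: l) = s i * wordProd s l := by
  simp [wordProd]

def properSubwordProds (s : Fin n → W) (l : List (Fin n)) : Set W :=
  {v | ∃ l', l'.Sublist l ∧ l'.length < l.length ∧ wordProd s l' = v}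

variable {s : Fin n → W}

theorem exists_wordProd_eq (hgen : Subgroup.closure (Set.range s) = ⊤)
    (hs2 : ∀ i : Fin n, s i * s i = 1) (w : W) : ∃ l : List (Fin n), wordProd s l = w := by
  have hw : w ∈ Subgroup.closure (Set.range s) := hgen ▸ Subgroup.mem_top w
  induction hw using Subgroup.closure_induction_left with
  | one => exact ⟨[], wordProd_nil s⟩
  | mul_left _ hx _ _ ih =>
    obtain ⟨i, rfl⟩ := hx
    obtain ⟨l, rfl⟩ := ih
    exact ⟨i :: l, wordProd_cons s i l⟩
  | inv_mul_cancel _ hx _ _ ih =>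
    obtain ⟨i, rfl⟩ := hx
    obtain ⟨l, rfl⟩ := ih
    exact ⟨i :: l, by rw [wordProd_cons, inv_eq_of_mul_eq_one_right (hs2 i)]⟩

theorem exists_isReducedWordFor {w : W} (hw : ∃ l : List (Fin n), wordProd s l = w) :
    ∃ l, IsReducedWordFor s w l := by
  have hk : ∃ k, ∃ l : List (Fin n), l.length = k ∧ wordProd s l = w :=
    let ⟨l, hl⟩ := hw; ⟨_, l, rfl, hl⟩
  obtain ⟨l, hlen, hl⟩ := Nat.find_spec hk
  exact ⟨l, hl, fun l' hl' => hlen ▸ Nat.find_min' hk ⟨l', rfl, hl'⟩⟩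

theorem IsReducedWordFor.length_lt_of_mem_properSubwordProds {v : W} {lv l : List (Fin n)}
    (hv : IsReducedWordFor s v lv)
    (hvw : v ∈ properSubwordProds s l) : lv.length < l.length := by
  obtain ⟨l', -, hlen, hl'⟩ := hvw
  exact (hv.2 l' hl').trans_lt hlen

end Words

section WordExpansion

variable {n : ℕ} {R W : Type*} [Ring R] [Group W] (S : Subring R) (δ : W →* R)

def Subring.conjBy (hS : ∀ g, ∀ z ∈ S, δ g * z * δ g⁻¹ ∈ S) (g : W) : S →+* S where
  toFun z := ⟨δ g * z * δ g⁻¹, hS g z z.2⟩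
  map_one' := Subtype.ext (by simp [← map_mul])
  map_mul' z z' := Subtype.ext (by
    simp only [Subring.coe_mul]
    rw [mul_assoc (δ g * z), ← mul_assoc (δ g⁻¹), ← mul_assoc (δ g⁻¹), map_inv_mul_map_self,
      one_mul, mul_assoc, mul_assoc, mul_assoc])
  map_zero' := Subtype.ext (by simp)
  map_add' z z' := Subtype.ext (by simp [mul_add, add_mul])

theorem Subring.map_mul_eq_conjBy_mul (hS : ∀ g, ∀ z ∈ S, δ g * z * δ g⁻¹ ∈ S) (g : W) (z : S) :
    δ g * z = (S.conjBy δ hS g z : R) * δ g := by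
  simp [Subring.conjBy, mul_assoc, map_inv_mul_map_self]

theorem map_mul_mem_span_image (hS : ∀ g, ∀ z ∈ S, δ g * z * δ g⁻¹ ∈ S) {P P' : Set W} {g : W}
    (hPP' : ∀ v ∈ P, g * v ∈ P') {x : R} (hx : x ∈ span S (δ '' P)) :
    δ g * x ∈ span S (δ '' P') := by
  induction hx using Submodule.span_induction with
  | mem _ hy =>
    obtain ⟨v, hv, rfl⟩ := hy
    exact subset_span ⟨g * v, hPP' v hv, map_mul δ g v⟩
  | zero => simp
  | add _ _ _ _ hx hy => simpa [mul_add] using add_mem hx hy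
  | smul z _ _ hx =>
    rw [Subring.smul_def, smul_eq_mul, ← mul_assoc, S.map_mul_eq_conjBy_mul δ hS, mul_assoc]
    exact smul_mem _ (S.conjBy δ hS g z) hx

theorem exists_isUnit_sub_smul_mem_span_properSubwordProds
    (hS : ∀ g, ∀ z ∈ S, δ g * z * δ g⁻¹ ∈ S) (T : W →* R) (s : Fin n → W)
    (hT : ∀ i, ∃ a b : S, IsUnit a ∧ T (s i) = a • δ (s i) + b) (l : List (Fin n)) :
    ∃ u : S, IsUnit u ∧
      T (wordProd s l) - u • δ (wordProd s l) ∈ span S (δ '' properSubwordProds s l) := by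
  induction l with
  | nil => exact ⟨1, isUnit_one, by simp [wordProd_nil]⟩
  | cons i t ih =>
    obtain ⟨u, hu, hy⟩ := ih
    obtain ⟨a, b, ha, hTi⟩ := hT i
    set w := wordProd s t
    set y := T w - u • δ w
    set c := S.conjBy δ hS (s i) u
    refine ⟨a * c, ha.mul (hu.map _), ?_⟩
    have hexpand : T (wordProd s (i :: t)) - (a * c) • δ (wordProd s (i :: t))
        = a • (δ (s i) * y) + (b * u) • δ w + b • y := by
      have hc : (c : R) * δ (s i) = δ (s i) * u := (S.map_mul_eq_conjBy_mul δ hS (s i) u).symm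
      have hTw : T w = u • δ w + y := (add_sub_cancel _ _).symm
      rw [wordProd_cons, map_mul, map_mul, hTi, hTw]
      simp only [Subring.smul_def, smul_eq_mul, Subring.coe_mul]
      rw [show (a : R) * c * (δ (s i) * δ w) = a * (c * δ (s i)) * δ w by noncomm_ring, hc]
      noncomm_ring
    have hcons : ∀ v ∈ properSubwordProds s t, s i * v ∈ properSubwordProds s (i :: t) := by
      rintro _ ⟨l', hl', hlen, rfl⟩
      exact ⟨i :: l', hl'.cons_cons i, by simpa using hlen, wordProd_cons s i l'⟩
    have hmono : properSubwordProds s t ⊆ properSubwordProds s (i :: t) := by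
      rintro _ ⟨l', hl', hlen, rfl⟩
      exact ⟨l', hl'.cons i, by simp; omega, rfl⟩
    have hw : w ∈ properSubwordProds s (i :: t) := ⟨t, List.sublist_cons_self i t, by simp, rfl⟩
    rw [hexpand]
    refine add_mem (add_mem (smul_mem _ _ (map_mul_mem_span_image S δ hS hcons hy))
      (smul_mem _ _ (subset_span ⟨w, hw, rfl⟩))) (smul_mem _ _ (span_mono (image_mono hmono) hy))

end WordExpansion

namespace TwistedGroupAlgebra

variable {W Q R : Type*} [Group W] [Field Q] [Ring R]
  {σ σd : W →* (Q ≃+* Q)} {φ : Q →+* R} {δd δ : W →* R} {Qd : Subring R} [Fintype W]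

theorem mul_dyn_mem (hQd : (Qd : Set R) = {x | ∃ cf : W → Q, x = ∑ w, φ (cf w) * δd w})
    (a : Q) (g : W) : φ a * δd g ∈ Qd := by
  change _ ∈ (Qd : Set R)
  rw [hQd]
  exact ⟨Pi.single g a, by simp [apply_ite φ, ite_mul, Pi.single_apply]⟩

theorem exists_eq_sum_mul_dyn
    (hQd : (Qd : Set R) = {x | ∃ cf : W → Q, x = ∑ w, φ (cf w) * δd w}) {z : R} (hz : z ∈ Qd) :
    ∃ cf : W → Q, z = ∑ w, φ (cf w) * δd w := by
  change z ∈ (Qd : Set R) at hz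
  rwa [hQd] at hz

theorem conj_mem (hQd : (Qd : Set R) = {x | ∃ cf : W → Q, x = ∑ w, φ (cf w) * δd w})
    (hδcomm : ∀ w v : W, δ v * δd w = δd w * δ v)
    (hδφ : ∀ (v : W) (a : Q), δ v * φ a = φ (σ v a) * δ v) (g : W) (z : R) (hz : z ∈ Qd) :
    δ g * z * δ g⁻¹ ∈ Qd := by
  obtain ⟨cf, hcf⟩ := exists_eq_sum_mul_dyn hQd hz
  have hconj : δ g * z * δ g⁻¹ = ∑ w, φ (σ g (cf w)) * δd w := by
    simp only [hcf, Finset.mul_sum, Finset.sum_mul]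
    refine Finset.sum_congr rfl fun w _ => ?_
    rw [← mul_assoc, hδφ, mul_assoc, mul_assoc, ← mul_assoc (δ g), hδcomm, mul_assoc, ← map_mul,
      mul_inv_cancel, map_one, mul_one]
  rw [hconj]
  exact Subring.sum_mem _ fun w _ => mul_dyn_mem hQd _ w

theorem isUnit_mul_dyn (hQd : (Qd : Set R) = {x | ∃ cf : W → Q, x = ∑ w, φ (cf w) * δd w})
    (hδdφ : ∀ (w : W) (a : Q), δd w * φ a = φ (σd w a) * δd w) {x : Q} (hx : x ≠ 0) (g : W) :
    IsUnit (⟨φ x * δd g, mul_dyn_mem hQd x g⟩ : Qd) := by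
  have hinv : δd g⁻¹ * φ x⁻¹ ∈ Qd := hδdφ g⁻¹ x⁻¹ ▸ mul_dyn_mem hQd _ _
  refine ⟨⟨_, ⟨_, hinv⟩, Subtype.ext ?_, Subtype.ext ?_⟩, rfl⟩
  · simp only [Subring.coe_mul, Subring.coe_one]
    rw [mul_assoc, ← mul_assoc (δd g), ← map_mul, mul_inv_cancel, map_one, one_mul, ← map_mul,
      mul_inv_cancel₀ hx, map_one]
  · simp only [Subring.coe_mul, Subring.coe_one]
    rw [mul_assoc, ← mul_assoc (φ x⁻¹), ← map_mul, inv_mul_cancel₀ hx, map_one, one_mul, ← map_mul,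
      inv_mul_cancel, map_one]

theorem exists_isUnit_eq_smul_add
    (hQd : (Qd : Set R) = {x | ∃ cf : W → Q, x = ∑ w, φ (cf w) * δd w})
    (hδcomm : ∀ w v : W, δ v * δd w = δd w * δ v)
    (hδdφ : ∀ (w : W) (a : Q), δd w * φ a = φ (σd w a) * δd w) {x : Q} (hx : x ≠ 0) (y : Q)
    (g : W) : ∃ a b : Qd, IsUnit a ∧ φ x * (δ g * δd g) + φ y * δd g = a • δ g + b :=
  ⟨_, ⟨_, mul_dyn_mem hQd y g⟩, isUnit_mul_dyn hQd hδdφ hx g, by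
    rw [hδcomm, Subring.smul_def, smul_eq_mul, mul_assoc]⟩

theorem linearIndependent_delta
    (hQd : (Qd : Set R) = {x | ∃ cf : W → Q, x = ∑ w, φ (cf w) * δd w})
    (hfree : ∀ cf : W × W → Q, (∑ p : W × W, φ (cf p) * δd p.1 * δ p.2) = 0 → ∀ p, cf p = 0) :
    LinearIndependent Qd δ := by
  rw [Fintype.linearIndependent_iff]
  intro g hg v
  choose cf hcf using fun v => exists_eq_sum_mul_dyn hQd (g v).2
  have hsum : ∑ p : W × W, φ (cf p.2 p.1) * δd p.1 * δ p.2 = 0 := by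
    rw [← hg, Fintype.sum_prod_type, Finset.sum_comm]
    simp only [Subring.smul_def, smul_eq_mul, hcf, Finset.sum_mul]
  ext
  rw [hcf, Subring.coe_zero]
  exact Finset.sum_eq_zero fun w _ => by rw [hfree _ hsum (w, v), map_zero, zero_mul]

theorem top_le_span_delta (hQd : (Qd : Set R) = {x | ∃ cf : W → Q, x = ∑ w, φ (cf w) * δd w})
    (hspan : ∀ x : R, ∃ cf : W × W → Q, x = ∑ p : W × W, φ (cf p) * δd p.1 * δ p.2) :
    ⊤ ≤ span Qd (range δ) := by
  intro x _
  obtain ⟨cf, rfl⟩ := hspan x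
  refine sum_mem fun p _ => ?_
  exact smul_mem _ (⟨_, mul_dyn_mem hQd (cf p) p.1⟩ : Qd) (subset_span ⟨p.2, rfl⟩)

end TwistedGroupAlgebra

theorem T_basis_general
    -- the Weyl group `W`, generated by the simple reflections `s i`
    {n : ℕ} {W : Type*} [Group W] [Fintype W]
    (s : Fin n → W) (hgen : Subgroup.closure (Set.range s) = ⊤)
    (hs2 : ∀ i : Fin n, s i * s i = 1)
    -- the root lattice `L = ℤΦ` and coroot lattice `Lc = ℤΦ∨` with their `W`-actions,
    -- the roots `Φ`, positive roots `Φpos`, simple roots `αr i`, and the coroot map `cor`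
    {L Lc : Type*} [AddCommGroup L] [AddCommGroup Lc]
    (Φ Φpos : Finset L)
    (hΦ : (Φ : Set L) = (Φpos : Set L) ∪ (-(Φpos : Set L)))
    (αr : Fin n → L) (hαr : ∀ i, αr i ∈ Φpos)
    (cor : L → Lc)
    -- the field `Q` with two commuting `W`-actions: the ordinary action `σ`
    -- and the dynamical action `σd`
    {Q : Type*} [Field Q]
    (σ σd : W →* (Q ≃+* Q))
    -- the theta data: `A μ = θ(z_μ)`, `Ah μ = θ(ℏ-z_μ)`, `B ν = θ(λ_ν)`, `Bh ν = θ(ℏ-λ_ν)`,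
    -- `C μ ν = θ(z_μ+λ_ν)`, `c = θ(ℏ)`
    (A Ah : L → Q) (B Bh : Lc → Q) (C : L → Lc → Q) (c : Q)
    (hA0 : ∀ β ∈ Φ, A β ≠ 0) (hAh0 : ∀ β ∈ Φ, Ah β ≠ 0)
    (hB0 : ∀ β ∈ Φ, B (cor β) ≠ 0) (hBh0 : ∀ β ∈ Φ, Bh (cor β) ≠ 0)
    -- the twisted group algebra `R = Q_{W^dyn×W}`, free left `Q`-module with basis
    -- `{δd w * δ v}` and twisted product; `φ : Q → R` is the inclusion
    {R : Type*} [Ring R]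
    (φ : Q →+* R) (δd δ : W →* R)
    (hδcomm : ∀ w v : W, δ v * δd w = δd w * δ v)
    (hδφ : ∀ (v : W) (a : Q), δ v * φ a = φ (σ v a) * δ v)
    (hδdφ : ∀ (w : W) (a : Q), δd w * φ a = φ (σd w a) * δd w)
    (hspan : ∀ x : R, ∃ cf : W × W → Q, x = ∑ p : W × W, φ (cf p) * δd p.1 * δ p.2)
    (hfree : ∀ cf : W × W → Q,
      (∑ p : W × W, φ (cf p) * δd p.1 * δ p.2) = 0 → ∀ p : W × W, cf p = 0)
    -- the elliptic Demazure–Lusztig operators `Tl w = T_w^λ`, `Tml w = T_w^{-λ}`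
    -- (the braid relations and `(T_i)² = 1` amount to `T_u T_v = T_(uv)` for all `u,v`)
    (Tl : W → R)
    (hTl1 : Tl 1 = 1)
    (hTlmul : ∀ u v : W, Tl u * Tl v = Tl (u * v))
    (hTls : ∀ i : Fin n, Tl (s i) =
      φ (Ah (αr i) * B (cor (αr i)) / (A (αr i) * Bh (cor (αr i)))) * (δ (s i) * δd (s i)) +
        φ (c * C (αr i) (-(cor (αr i))) / (A (αr i) * Bh (cor (αr i)))) * δd (s i))
    -- the subring `Qd = Q_{W^dyn}` of `R`, spanned by `{φ a * δd w}`
    (Qd : Subring R)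
    (hQd : (Qd : Set R) = {x : R | ∃ cf : W → Q, x = ∑ w : W, φ (cf w) * δd w})
 :
    ∃ bT : Module.Basis W (↥Qd) R, ∀ w : W, bT w = Tl w := by
  choose lw hlw using fun w => exists_isReducedWordFor (exists_wordProd_eq hgen hs2 w)
  let T : W →* R := ⟨⟨Tl, hTl1⟩, fun u v => (hTlmul u v).symm⟩
  let b := Module.Basis.mk (TwistedGroupAlgebra.linearIndependent_delta hQd hfree)
    (TwistedGroupAlgebra.top_le_span_delta hQd hspan)
  have hTs : ∀ i, ∃ a b : Qd, IsUnit a ∧ T (s i) = a • δ (s i) + b := by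
    intro i
    have hα : αr i ∈ Φ := by
      rw [← Finset.mem_coe, hΦ]
      exact Or.inl (hαr i)
    change ∃ a b : Qd, IsUnit a ∧ Tl (s i) = _
    rw [hTls i]
    exact TwistedGroupAlgebra.exists_isUnit_eq_smul_add hQd hδcomm hδdφ (div_ne_zero
      (mul_ne_zero (hAh0 _ hα) (hB0 _ hα)) (mul_ne_zero (hA0 _ hα) (hBh0 _ hα))) _ (s i)
  have htri : ∀ w, ∃ u : Qd, IsUnit u ∧
      Tl w - u • b w ∈ span Qd (b '' {v | (lw v).length < (lw w).length}) := by
    intro w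
    obtain ⟨u, hu, hmem⟩ := exists_isUnit_sub_smul_mem_span_properSubwordProds Qd δ
      (TwistedGroupAlgebra.conj_mem hQd hδcomm hδφ) T s hTs (lw w)
    rw [(hlw w).1] at hmem
    rw [Module.Basis.coe_mk]
    exact ⟨u, hu, span_mono (image_mono fun v hv =>
      (hlw v).length_lt_of_mem_properSubwordProds hv) hmem⟩
  exact ⟨.mk (b.linearIndependent_of_triangular htri) (b.top_le_span_of_triangular htri),
    Module.Basis.mk_apply _ _⟩

/-- `{T_w^λ : w ∈ W}` is a basis of `Q_{W^dyn×W}` as a free left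
`Q_{W^dyn}`-module. -/
theorem T_basis
    -- the Weyl group `W`, generated by the simple reflections `s i`
    {n : ℕ} {W : Type*} [Group W] [Fintype W] [DecidableEq W]
    (s : Fin n → W) (hgen : Subgroup.closure (Set.range s) = ⊤)
    (hs2 : ∀ i : Fin n, s i * s i = 1)
    -- the root lattice `L = ℤΦ` and coroot lattice `Lc = ℤΦ∨` with their `W`-actions,
    -- the roots `Φ`, positive roots `Φpos`, simple roots `αr i`, and the coroot map `cor`
    {L Lc : Type*} [AddCommGroup L] [AddCommGroup Lc] [DecidableEq L]
    (ρ : W →* AddAut L) (ρc : W →* AddAut Lc)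
    (Φ Φpos : Finset L)
    (hΦ : (Φ : Set L) = (Φpos : Set L) ∪ (-(Φpos : Set L)))
    (αr : Fin n → L) (hαr : ∀ i, αr i ∈ Φpos)
    (cor : L → Lc)
    (hραr : ∀ i, ρ (s i) (αr i) = -(αr i))
    (hperm : ∀ i : Fin n, ∀ β ∈ Φpos, β ≠ αr i → ρ (s i) β ∈ Φpos)
    (hΦinv : ∀ w : W, ∀ β ∈ Φ, ρ w β ∈ Φ)
    (hcorW : ∀ w : W, ∀ β ∈ Φ, cor (ρ w β) = ρc w (cor β))
    (hcorneg : ∀ β ∈ Φ, cor (-β) = -(cor β))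
    -- the field `Q` with two commuting `W`-actions: the ordinary action `σ`
    -- and the dynamical action `σd`
    {Q : Type*} [Field Q]
    (σ σd : W →* (Q ≃+* Q))
    (hσcomm : ∀ (w v : W) (a : Q), σ w (σd v a) = σd v (σ w a))
    -- the theta data: `A μ = θ(z_μ)`, `Ah μ = θ(ℏ-z_μ)`, `B ν = θ(λ_ν)`, `Bh ν = θ(ℏ-λ_ν)`,
    -- `C μ ν = θ(z_μ+λ_ν)`, `c = θ(ℏ)`
    (A Ah : L → Q) (B Bh : Lc → Q) (C : L → Lc → Q) (c : Q)
    (hA : ∀ (w : W) (μ : L), σ w (A μ) = A (ρ w μ))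
    (hAh : ∀ (w : W) (μ : L), σ w (Ah μ) = Ah (ρ w μ))
    (hB : ∀ (w : W) (ν : Lc), σ w (B ν) = B ν)
    (hBh : ∀ (w : W) (ν : Lc), σ w (Bh ν) = Bh ν)
    (hC : ∀ (w : W) (μ : L) (ν : Lc), σ w (C μ ν) = C (ρ w μ) ν)
    (hdA : ∀ (w : W) (μ : L), σd w (A μ) = A μ)
    (hdAh : ∀ (w : W) (μ : L), σd w (Ah μ) = Ah μ)
    (hdB : ∀ (w : W) (ν : Lc), σd w (B ν) = B (ρc w ν))
    (hdBh : ∀ (w : W) (ν : Lc), σd w (Bh ν) = Bh (ρc w ν))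
    (hdC : ∀ (w : W) (μ : L) (ν : Lc), σd w (C μ ν) = C μ (ρc w ν))
    (hcσ : ∀ w : W, σ w c = c) (hcσd : ∀ w : W, σd w c = c)
    (hAneg : ∀ μ : L, A (-μ) = -(A μ)) (hBneg : ∀ ν : Lc, B (-ν) = -(B ν))
    (hA0 : ∀ β ∈ Φ, A β ≠ 0) (hAh0 : ∀ β ∈ Φ, Ah β ≠ 0) (hAh0n : ∀ β ∈ Φ, Ah (-β) ≠ 0)
    (hB0 : ∀ β ∈ Φ, B (cor β) ≠ 0) (hBh0 : ∀ β ∈ Φ, Bh (cor β) ≠ 0)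
    (hBh0n : ∀ β ∈ Φ, Bh (-(cor β)) ≠ 0)
    -- the twisted group algebra `R = Q_{W^dyn×W}`, free left `Q`-module with basis
    -- `{δd w * δ v}` and twisted product; `φ : Q → R` is the inclusion
    {R : Type*} [Ring R]
    (φ : Q →+* R) (δd δ : W →* R)
    (hδcomm : ∀ w v : W, δ v * δd w = δd w * δ v)
    (hδφ : ∀ (v : W) (a : Q), δ v * φ a = φ (σ v a) * δ v)
    (hδdφ : ∀ (w : W) (a : Q), δd w * φ a = φ (σd w a) * δd w)
    (hspan : ∀ x : R, ∃ cf : W × W → Q, x = ∑ p : W × W, φ (cf p) * δd p.1 * δ p.2)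
    (hfree : ∀ cf : W × W → Q,
      (∑ p : W × W, φ (cf p) * δd p.1 * δ p.2) = 0 → ∀ p : W × W, cf p = 0)
    -- the elliptic Demazure–Lusztig operators `Tl w = T_w^λ`, `Tml w = T_w^{-λ}`
    -- (the braid relations and `(T_i)² = 1` amount to `T_u T_v = T_(uv)` for all `u,v`)
    (Tl Tml : W → R)
    (hTl1 : Tl 1 = 1) (hTml1 : Tml 1 = 1)
    (hTlmul : ∀ u v : W, Tl u * Tl v = Tl (u * v))
    (hTmlmul : ∀ u v : W, Tml u * Tml v = Tml (u * v))
    (hTls : ∀ i : Fin n, Tl (s i) =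
      φ (Ah (αr i) * B (cor (αr i)) / (A (αr i) * Bh (cor (αr i)))) * (δ (s i) * δd (s i)) +
        φ (c * C (αr i) (-(cor (αr i))) / (A (αr i) * Bh (cor (αr i)))) * δd (s i))
    (hTmls : ∀ i : Fin n, Tml (s i) =
      -(φ (Ah (αr i) * B (cor (αr i)) / (A (αr i) * Bh (-(cor (αr i))))) * (δ (s i) * δd (s i))) +
        φ (c * C (αr i) (cor (αr i)) / (A (αr i) * Bh (-(cor (αr i))))) * δd (s i))
    -- the subring `Qd = Q_{W^dyn}` of `R`, spanned by `{φ a * δd w}`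
    (Qd : Subring R)
    (hQd : (Qd : Set R) = {x : R | ∃ cf : W → Q, x = ∑ w : W, φ (cf w) * δd w})
 :
    ∃ bT : Module.Basis W (↥Qd) R, ∀ w : W, bT w = Tl w :=
  T_basis_general s hgen hs2 Φ Φpos hΦ αr hαr cor σ σd A Ah B Bh C c hA0 hAh0 hB0 hBh0 φ δd δ hδcomm
    hδφ hδdφ hspan hfree Tl hTl1 hTlmul hTls Qd hQd
end

section
/- Adjointness of the anti-involution under the Poincaré pairing: for all f, f' ∈ Q_W^* and all x ∈ Q_{W^dyn×W}, Y_Π • ((x • f) · f') = Y_Π • (f · (ι(x) • f')). -/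
/-!
Acting by `Y_Π = (Σ_u δd_u) (Σ_v δ_v g⁻¹)` turns `h : W → Q` into the constant function
`Σ_{u,v} ^v(g⁻¹) · ^{u^dyn}(h v)`, which is additive in `h`. Both sides are additive in `x`, so
it suffices to take `x = a δd_w δ_m`. Reindexing the double sum by `(u, v) ↦ (u w, v m)` then
matches the two sides term by term: the factor `^{vm}g / ^v g` contributed by `ι(x)` turns
`^{vm}(g⁻¹)` into `^v(g⁻¹)`.
-/

open scoped BigOperators
open scoped Classical

theorem RingEquiv.inv_mul_self_div_eq_inv {K : Type*} [DivisionRing K] (τ τ' : K ≃+* K)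
    (g : K) : τ g⁻¹ * τ g / τ' g = τ' g⁻¹ := by
  rcases eq_or_ne g 0 with rfl | hg
  · simp
  · rw [← map_mul, inv_mul_cancel₀ hg, map_one, one_div, map_inv₀]

theorem map_sum_of_map_add {R X M : Type*} [AddCommMonoid R] [AddCommGroup M] {F : R → X → M}
    (hF : ∀ (x y : R) (f : X), F (x + y) f = F x f + F y f)
    {ι : Type*} (s : Finset ι) (x : ι → R) (h : X) :
    F (∑ i ∈ s, x i) h = ∑ i ∈ s, F (x i) h :=
  map_sum (AddMonoidHom.mk' (F · h) (hF · · h)) x s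

theorem MonoidHom.apply_map_inv_apply {G K : Type*} [Group G] [Semiring K]
    (σ : G →* (K ≃+* K)) (g : G) (x : K) : σ g (σ g⁻¹ x) = x := by
  rw [← RingAut.mul_apply, ← map_mul, mul_inv_cancel, map_one]
  rfl

section TwistedGroupAlgebra

variable {W : Type*} [Group W] {Q : Type*} [Field Q] {R : Type*} [Ring R]
  {σ σd : W →* (Q ≃+* Q)} {φ : Q →+* R} {δd δ : W →* R}

theorem delta_dyn_mul_delta_mul_phi
    (hσcomm : ∀ (w v : W) (a : Q), σ w (σd v a) = σd v (σ w a))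
    (hδφ : ∀ (v : W) (a : Q), δ v * φ a = φ (σ v a) * δ v)
    (hδdφ : ∀ (w : W) (a : Q), δd w * φ a = φ (σd w a) * δd w) (w v : W) (a : Q) :
    δd w * δ v * φ a = φ (σ v (σd w a)) * δd w * δ v := by
  rw [mul_assoc, hδφ, ← mul_assoc, hδdφ, hσcomm]

theorem sum_delta_dyn_mul_sum_delta_mul_phi [Fintype W]
    (hσcomm : ∀ (w v : W) (a : Q), σ w (σd v a) = σd v (σ w a))
    (hδφ : ∀ (v : W) (a : Q), δ v * φ a = φ (σ v a) * δ v)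
    (hδdφ : ∀ (w : W) (a : Q), δd w * φ a = φ (σd w a) * δd w)
    {c : Q} (hc : ∀ u, σd u c = c) :
    (∑ u : W, δd u) * (∑ v : W, δ v * φ c) = ∑ p : W × W, φ (σ p.2 c) * δd p.1 * δ p.2 := by
  simp only [Finset.sum_mul_sum, Fintype.sum_prod_type, ← mul_assoc,
    delta_dyn_mul_delta_mul_phi hσcomm hδφ hδdφ, hc]

theorem iot_phi_mul_delta_dyn_mul_delta
    (hσcomm : ∀ (w v : W) (a : Q), σ w (σd v a) = σd v (σ w a))
    (hδφ : ∀ (v : W) (a : Q), δ v * φ a = φ (σ v a) * δ v)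
    (hδdφ : ∀ (w : W) (a : Q), δd w * φ a = φ (σd w a) * δd w)
    {iot : R →+ R} {g : Q}
    (hiot : ∀ (a : Q) (v w : W), iot (φ a * (δd v * δ w)) = δd v⁻¹ * δ w⁻¹ * φ (a * σ w g / g))
    (a : Q) (w m : W) :
    iot (φ a * δd w * δ m) = φ (σ m⁻¹ (σd w⁻¹ (a * σ m g / g))) * δd w⁻¹ * δ m⁻¹ := by
  rw [mul_assoc, hiot, delta_dyn_mul_delta_mul_phi hσcomm hδφ hδdφ]

variable [Fintype W]

variable (σ σd) in
def poincarePairing (c : Q) (h : W → Q) : Q :=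
  ∑ p : W × W, σ p.2 c * σd p.1 (h p.2)

theorem poincarePairing_sum {ι : Type*} (s : Finset ι) (c : Q) (h : ι → W → Q) :
    poincarePairing σ σd c (∑ i ∈ s, h i) = ∑ i ∈ s, poincarePairing σ σd c (h i) := by
  simp only [poincarePairing, Finset.sum_apply, map_sum, Finset.mul_sum]
  exact Finset.sum_comm

theorem bullet_sum_delta_dyn_mul_sum_delta_mul_phi_apply {bullet : R → (W → Q) → (W → Q)}
    (hσcomm : ∀ (w v : W) (a : Q), σ w (σd v a) = σd v (σ w a))
    (hδφ : ∀ (v : W) (a : Q), δ v * φ a = φ (σ v a) * δ v)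
    (hδdφ : ∀ (w : W) (a : Q), δd w * φ a = φ (σd w a) * δd w)
    (hbuladd : ∀ (x y : R) (f : W → Q), bullet (x + y) f = bullet x f + bullet y f)
    (hbul : ∀ (a : Q) (w v : W) (f : W → Q),
      bullet (φ a * δd w * δ v) f = fun t => σ t a * σd w (f (t * v)))
    {c : Q} (hc : ∀ u, σd u c = c) (h : W → Q) (t : W) :
    bullet ((∑ u : W, δd u) * (∑ v : W, δ v * φ c)) h t = poincarePairing σ σd c h := by
  rw [sum_delta_dyn_mul_sum_delta_mul_phi hσcomm hδφ hδdφ hc, map_sum_of_map_add hbuladd,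
    Finset.sum_apply]
  refine Fintype.sum_equiv (.prodCongr (.refl W) (.mulLeft t)) _ _ fun p => ?_
  simp [hbul, map_mul]

theorem poincarePairing_bullet_mul_eq_mul_bullet {bullet : R → (W → Q) → (W → Q)}
    (hσcomm : ∀ (w v : W) (a : Q), σ w (σd v a) = σd v (σ w a))
    (hbul : ∀ (a : Q) (w v : W) (f : W → Q),
      bullet (φ a * δd w * δ v) f = fun t => σ t a * σd w (f (t * v)))
    {g : Q} (hg : ∀ u, σd u g = g) (a : Q) (w m : W) (f f' : W → Q) :
    poincarePairing σ σd g⁻¹ (bullet (φ a * δd w * δ m) f * f') =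
      poincarePairing σ σd g⁻¹
        (f * bullet (φ (σ m⁻¹ (σd w⁻¹ (a * σ m g / g))) * δd w⁻¹ * δ m⁻¹) f') := by
  refine Fintype.sum_equiv (.prodCongr (.mulRight w) (.mulRight m)) _ _ fun ⟨u, v⟩ => ?_
  have hσfix : ∀ u x z, σd u z = z → σd u (σ x z) = σ x z := fun u x z hz => by
    rw [← hσcomm, hz]
  have hcancel := RingEquiv.inv_mul_self_div_eq_inv (σ (v * m)) (σ v) g
  simp only [hbul, Pi.mul_apply, Equiv.prodCongr_apply, Equiv.coe_mulRight, Prod.map_fst,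
    Prod.map_snd, mul_inv_cancel_right, map_mul, map_div₀, RingAut.mul_apply] at hcancel ⊢
  simp only [MonoidHom.apply_map_inv_apply, hσcomm, hg, hσfix]
  rw [← hcancel]
  ring

end TwistedGroupAlgebra

theorem iota_adjoint_general
    -- the Weyl group `W`, generated by the simple reflections `s i`
    {W : Type*} [Group W] [Fintype W]
    -- the root lattice `L = ℤΦ` and coroot lattice `Lc = ℤΦ∨` with their `W`-actions,
    -- the roots `Φ`, positive roots `Φpos`, simple roots `αr i`, and the coroot map `cor`
    {L : Type*}
    (Φpos : Finset L)
    -- the field `Q` with two commuting `W`-actions: the ordinary action `σ`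
    -- and the dynamical action `σd`
    {Q : Type*} [Field Q]
    (σ σd : W →* (Q ≃+* Q))
    (hσcomm : ∀ (w v : W) (a : Q), σ w (σd v a) = σd v (σ w a))
    -- the theta data: `A μ = θ(z_μ)`, `Ah μ = θ(ℏ-z_μ)`, `B ν = θ(λ_ν)`, `Bh ν = θ(ℏ-λ_ν)`,
    -- `C μ ν = θ(z_μ+λ_ν)`, `c = θ(ℏ)`
    (A Ah : L → Q)
    (hdA : ∀ (w : W) (μ : L), σd w (A μ) = A μ)
    (hdAh : ∀ (w : W) (μ : L), σd w (Ah μ) = Ah μ)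
    -- the twisted group algebra `R = Q_{W^dyn×W}`, free left `Q`-module with basis
    -- `{δd w * δ v}` and twisted product; `φ : Q → R` is the inclusion
    {R : Type*} [Ring R]
    (φ : Q →+* R) (δd δ : W →* R)
    (hδφ : ∀ (v : W) (a : Q), δ v * φ a = φ (σ v a) * δ v)
    (hδdφ : ∀ (w : W) (a : Q), δd w * φ a = φ (σd w a) * δd w)
    (hspan : ∀ x : R, ∃ cf : W × W → Q, x = ∑ p : W × W, φ (cf p) * δd p.1 * δ p.2)
    -- the anti-involution `ι(a δd_v δ_w) = δd_{v⁻¹} δ_{w⁻¹} · a·(^w g)/g`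
    (iot : R →+ R)
    (hiot : ∀ (a : Q) (v w : W),
      iot (φ a * (δd v * δ w)) =
        δd v⁻¹ * δ w⁻¹ * φ (a * σ w (∏ β ∈ Φpos, Ah β / A β) / (∏ β ∈ Φpos, Ah β / A β)))
    -- the `•`-action of `Q_{W^dyn×W}` on `Q_W^* = Hom(W,Q)` (written in coordinates:
    -- a function `f : W → Q` stands for `Σ_u f_u · (f u)`)
    (bullet : R → (W → Q) → (W → Q))
    (hbuladd : ∀ (x y : R) (f : W → Q), bullet (x + y) f = bullet x f + bullet y f)
    (hbul : ∀ (a : Q) (w v : W) (f : W → Q),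
      bullet (φ a * δd w * δ v) f = fun t => σ t a * σd w (f (t * v)))
    (f f' : W → Q) (x : R) :
    bullet ((∑ u : W, δd u) * (∑ u : W, δ u * φ (∏ β ∈ Φpos, A β / Ah β))) (bullet x f * f') =
      bullet ((∑ u : W, δd u) * (∑ u : W, δ u * φ (∏ β ∈ Φpos, A β / Ah β))) (f * bullet (iot x) f') := by
  set g := ∏ β ∈ Φpos, Ah β / A β
  have hg_inv : ∏ β ∈ Φpos, A β / Ah β = g⁻¹ := by
    simp only [g, ← Finset.prod_inv_distrib, inv_div]
  have hg : ∀ u, σd u g = g := fun u => by simp only [g, map_prod, map_div₀, hdA, hdAh]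
  have hg_inv_fix : ∀ u, σd u g⁻¹ = g⁻¹ := fun u => by rw [map_inv₀, hg]
  obtain ⟨cf, rfl⟩ := hspan x
  funext t
  have hY := bullet_sum_delta_dyn_mul_sum_delta_mul_phi_apply hσcomm hδφ hδdφ hbuladd hbul
    hg_inv_fix
  rw [hg_inv, hY, hY]
  simp only [map_sum_of_map_add hbuladd, map_sum, Finset.sum_mul, Finset.mul_sum,
    poincarePairing_sum, iot_phi_mul_delta_dyn_mul_delta hσcomm hδφ hδdφ hiot]
  exact Finset.sum_congr rfl fun p _ =>
    poincarePairing_bullet_mul_eq_mul_bullet hσcomm hbul hg (cf p) p.1 p.2 f f'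

/-- adjointness of the anti-involution under the Poincaré pairing:
`Y_Π • ((x • f) · f') = Y_Π • (f · (ι(x) • f'))`. -/
theorem iota_adjoint
    -- the Weyl group `W`, generated by the simple reflections `s i`
    {n : ℕ} {W : Type*} [Group W] [Fintype W] [DecidableEq W]
    (s : Fin n → W) (hgen : Subgroup.closure (Set.range s) = ⊤)
    (hs2 : ∀ i : Fin n, s i * s i = 1)
    -- the root lattice `L = ℤΦ` and coroot lattice `Lc = ℤΦ∨` with their `W`-actions,
    -- the roots `Φ`, positive roots `Φpos`, simple roots `αr i`, and the coroot map `cor`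
    {L Lc : Type*} [AddCommGroup L] [AddCommGroup Lc] [DecidableEq L]
    (ρ : W →* Multiplicative (AddAut L)) (ρc : W →* Multiplicative (AddAut Lc))
    (Φ Φpos : Finset L)
    (hΦ : (Φ : Set L) = (Φpos : Set L) ∪ (-(Φpos : Set L)))
    (αr : Fin n → L) (hαr : ∀ i, αr i ∈ Φpos)
    (cor : L → Lc)
    (hραr : ∀ i, Multiplicative.toAdd (ρ (s i)) (αr i) = -(αr i))
    (hperm : ∀ i : Fin n, ∀ β ∈ Φpos, β ≠ αr i → Multiplicative.toAdd (ρ (s i)) β ∈ Φpos)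
    (hΦinv : ∀ w : W, ∀ β ∈ Φ, Multiplicative.toAdd (ρ w) β ∈ Φ)
    (hcorW : ∀ w : W, ∀ β ∈ Φ, cor (Multiplicative.toAdd (ρ w) β) = Multiplicative.toAdd (ρc w) (cor β))
    (hcorneg : ∀ β ∈ Φ, cor (-β) = -(cor β))
    -- the field `Q` with two commuting `W`-actions: the ordinary action `σ`
    -- and the dynamical action `σd`
    {Q : Type*} [Field Q]
    (σ σd : W →* (Q ≃+* Q))
    (hσcomm : ∀ (w v : W) (a : Q), σ w (σd v a) = σd v (σ w a))
    -- the theta data: `A μ = θ(z_μ)`, `Ah μ = θ(ℏ-z_μ)`, `B ν = θ(λ_ν)`, `Bh ν = θ(ℏ-λ_ν)`,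
    -- `C μ ν = θ(z_μ+λ_ν)`, `c = θ(ℏ)`
    (A Ah : L → Q) (B Bh : Lc → Q) (C : L → Lc → Q) (c : Q)
    (hA : ∀ (w : W) (μ : L), σ w (A μ) = A (Multiplicative.toAdd (ρ w) μ))
    (hAh : ∀ (w : W) (μ : L), σ w (Ah μ) = Ah (Multiplicative.toAdd (ρ w) μ))
    (hB : ∀ (w : W) (ν : Lc), σ w (B ν) = B ν)
    (hBh : ∀ (w : W) (ν : Lc), σ w (Bh ν) = Bh ν)
    (hC : ∀ (w : W) (μ : L) (ν : Lc), σ w (C μ ν) = C (Multiplicative.toAdd (ρ w) μ) ν)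
    (hdA : ∀ (w : W) (μ : L), σd w (A μ) = A μ)
    (hdAh : ∀ (w : W) (μ : L), σd w (Ah μ) = Ah μ)
    (hdB : ∀ (w : W) (ν : Lc), σd w (B ν) = B (Multiplicative.toAdd (ρc w) ν))
    (hdBh : ∀ (w : W) (ν : Lc), σd w (Bh ν) = Bh (Multiplicative.toAdd (ρc w) ν))
    (hdC : ∀ (w : W) (μ : L) (ν : Lc), σd w (C μ ν) = C μ (Multiplicative.toAdd (ρc w) ν))
    (hcσ : ∀ w : W, σ w c = c) (hcσd : ∀ w : W, σd w c = c)
    (hAneg : ∀ μ : L, A (-μ) = -(A μ)) (hBneg : ∀ ν : Lc, B (-ν) = -(B ν))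
    (hA0 : ∀ β ∈ Φ, A β ≠ 0) (hAh0 : ∀ β ∈ Φ, Ah β ≠ 0) (hAh0n : ∀ β ∈ Φ, Ah (-β) ≠ 0)
    (hB0 : ∀ β ∈ Φ, B (cor β) ≠ 0) (hBh0 : ∀ β ∈ Φ, Bh (cor β) ≠ 0)
    (hBh0n : ∀ β ∈ Φ, Bh (-(cor β)) ≠ 0)
    -- the twisted group algebra `R = Q_{W^dyn×W}`, free left `Q`-module with basis
    -- `{δd w * δ v}` and twisted product; `φ : Q → R` is the inclusion
    {R : Type*} [Ring R]
    (φ : Q →+* R) (δd δ : W →* R)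
    (hδcomm : ∀ w v : W, δ v * δd w = δd w * δ v)
    (hδφ : ∀ (v : W) (a : Q), δ v * φ a = φ (σ v a) * δ v)
    (hδdφ : ∀ (w : W) (a : Q), δd w * φ a = φ (σd w a) * δd w)
    (hspan : ∀ x : R, ∃ cf : W × W → Q, x = ∑ p : W × W, φ (cf p) * δd p.1 * δ p.2)
    (hfree : ∀ cf : W × W → Q,
      (∑ p : W × W, φ (cf p) * δd p.1 * δ p.2) = 0 → ∀ p : W × W, cf p = 0)
    -- the anti-involution `ι(a δd_v δ_w) = δd_{v⁻¹} δ_{w⁻¹} · a·(^w g)/g`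
    (iot : R →+ R)
    (hiot : ∀ (a : Q) (v w : W),
      iot (φ a * (δd v * δ w)) =
        δd v⁻¹ * δ w⁻¹ * φ (a * σ w (∏ β ∈ Φpos, Ah β / A β) / (∏ β ∈ Φpos, Ah β / A β)))
    -- the `•`-action of `Q_{W^dyn×W}` on `Q_W^* = Hom(W,Q)` (written in coordinates:
    -- a function `f : W → Q` stands for `Σ_u f_u · (f u)`)
    (bullet : R → (W → Q) → (W → Q))
    (hbul1 : ∀ f : W → Q, bullet 1 f = f)
    (hbulmul : ∀ (x y : R) (f : W → Q), bullet (x * y) f = bullet x (bullet y f))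
    (hbuladd : ∀ (x y : R) (f : W → Q), bullet (x + y) f = bullet x f + bullet y f)
    (hbul : ∀ (a : Q) (w v : W) (f : W → Q),
      bullet (φ a * δd w * δ v) f = fun t => σ t a * σd w (f (t * v)))
    (f f' : W → Q) (x : R) :
    bullet ((∑ u : W, δd u) * (∑ u : W, δ u * φ (∏ β ∈ Φpos, A β / Ah β))) (bullet x f * f') =
      bullet ((∑ u : W, δd u) * (∑ u : W, δ u * φ (∏ β ∈ Φpos, A β / Ah β))) (f * bullet (iot x) f') :=
  iota_adjoint_general Φpos σ σd hσcomm A Ah hdA hdAh φ δd δ hδφ hδdφ hspan iot hiot bullet hbuladd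
    hbul f f' x
end
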